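/- If D ⊆ ℝ² is a bounded nonconvex domain, then there exist a boundary point y ∈ ∂D, a closed half-plane P with y ∈ ∂P, and r > 0 such that P ∩ (closure(B_r(y)) \ {y}) ⊆ D and (∂D \ {y}) ∩ B_r(y) ⊆ ℝ² \ P. -/

import Mathlib

open scoped RealInnerProductSpace

noncomputable abbrev E2 := EuclideanSpace ℝ (Fin 2)

/-- Laplacian of `f : ℝ² → ℝ`: sum of second derivatives along the coordinate axes. -/
noncomputable def lap (f : E2 → ℝ) (x : E2) : ℝ :=
  ∑ i : Fin 2, fderiv ℝ (fun y => fderiv ℝ f y (EuclideanSpace.single i 1)) x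
    (EuclideanSpace.single i 1)

namespace Reentrant

open Set Metric

lemma unif_nbhd {K U : Set E2} (hK : IsCompact K) (hU : IsOpen U) (hKU : K ⊆ U) :
    ∃ ε > 0, ∀ x ∈ K, ∀ y : E2, dist y x < ε → y ∈ U := by
  rcases hK.exists_thickening_subset_open hU hKU with ⟨ε, hε, hsub⟩
  exact ⟨ε, hε, fun x hx y hy => hsub (Metric.mem_thickening_iff.2 ⟨x, hx, hy⟩)⟩

lemma decomp {e v : E2} (he : ‖e‖ = 1) (hv : ‖v‖ = 1) (hev : ⟪e, v⟫ = 0)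
    (x : E2) : x = ⟪x, e⟫ • e + ⟪x, v⟫ • v := by
  have hee : ⟪e, e⟫ = (1:ℝ) := by rw [real_inner_self_eq_norm_sq, he]; norm_num
  have hvv : ⟪v, v⟫ = (1:ℝ) := by rw [real_inner_self_eq_norm_sq, hv]; norm_num
  have hve : ⟪v, e⟫ = (0:ℝ) := by rw [real_inner_comm]; exact hev
  have li : LinearIndependent ℝ ![e, v] := by
    rw [LinearIndependent.pair_iff]
    intro s t hst
    have h1 : ⟪s • e + t • v, e⟫ = (0:ℝ) := by rw [hst]; exact inner_zero_left e
    have h2 : ⟪s • e + t • v, v⟫ = (0:ℝ) := by rw [hst]; exact inner_zero_left v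
    rw [inner_add_left, real_inner_smul_left, real_inner_smul_left, hee, hve] at h1
    rw [inner_add_left, real_inner_smul_left, real_inner_smul_left, hvv, hev] at h2
    constructor <;> linarith
  have hcard : Fintype.card (Fin 2) = Module.finrank ℝ E2 := by
    simp [finrank_euclideanSpace]
  let b : Module.Basis (Fin 2) ℝ E2 := basisOfLinearIndependentOfCardEqFinrank li hcard
  have hb : ⇑b = ![e, v] := coe_basisOfLinearIndependentOfCardEqFinrank li hcard
  have hspan : Submodule.span ℝ {e, v} = ⊤ := by
    have h1 : Set.range ⇑b ⊆ ({e, v} : Set E2) := by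
      rw [hb]; intro z hz
      rcases hz with ⟨i, rfl⟩
      fin_cases i <;> simp
    have h2 := Submodule.span_mono (R := ℝ) h1
    rw [b.span_eq] at h2
    exact top_le_iff.1 h2
  set w : E2 := x - (⟪x, e⟫ • e + ⟪x, v⟫ • v) with hw
  have hwe : ⟪w, e⟫ = (0:ℝ) := by
    rw [hw, inner_sub_left, inner_add_left, real_inner_smul_left, real_inner_smul_left,
      hee, hve]
    ring
  have hwv : ⟪w, v⟫ = (0:ℝ) := by
    rw [hw, inner_sub_left, inner_add_left, real_inner_smul_left, real_inner_smul_left,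
      hvv, hev]
    ring
  have hwmem : w ∈ Submodule.span ℝ ({e, v} : Set E2) := by rw [hspan]; trivial
  rcases Submodule.mem_span_pair.1 hwmem with ⟨a, c, hac⟩
  have ha : a = 0 := by
    have h3 : ⟪a • e + c • v, e⟫ = (0:ℝ) := by rw [hac]; exact hwe
    rw [inner_add_left, real_inner_smul_left, real_inner_smul_left, hee, hve] at h3
    linarith
  have hc : c = 0 := by
    have h3 : ⟪a • e + c • v, v⟫ = (0:ℝ) := by rw [hac]; exact hwv
    rw [inner_add_left, real_inner_smul_left, real_inner_smul_left, hvv, hev] at h3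
    linarith
  have hw0 : w = 0 := by rw [← hac, ha, hc]; simp
  exact (sub_eq_zero.1 hw0)

section Column

/-- the vertical reach function -/
noncomputable def phi (D : Set E2) (O e v : E2) (t : ℝ) : ℝ :=
  sSup {h : ℝ | 0 ≤ h ∧ h ≤ 1 ∧ ∀ u : ℝ, 0 ≤ u → u < h → O + t • e + u • v ∈ D}

variable {D : Set E2} {O e v : E2}

lemma phiA_zero_mem (D : Set E2) (O e v : E2) (t : ℝ) :
    (0:ℝ) ∈ {h : ℝ | 0 ≤ h ∧ h ≤ 1 ∧ ∀ u : ℝ, 0 ≤ u → u < h → O + t • e + u • v ∈ D} :=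
  ⟨le_refl 0, zero_le_one, fun _ h0 h1 => absurd (h0.trans_lt h1) (lt_irrefl 0)⟩

lemma phiA_bdd (D : Set E2) (O e v : E2) (t : ℝ) :
    BddAbove {h : ℝ | 0 ≤ h ∧ h ≤ 1 ∧ ∀ u : ℝ, 0 ≤ u → u < h → O + t • e + u • v ∈ D} :=
  ⟨1, fun _ hh => hh.2.1⟩

lemma phi_nonneg (t : ℝ) : 0 ≤ phi D O e v t :=
  le_csSup (phiA_bdd D O e v t) (phiA_zero_mem D O e v t)

lemma phi_le_one (t : ℝ) : phi D O e v t ≤ 1 :=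
  csSup_le ⟨0, phiA_zero_mem D O e v t⟩ (fun _ hh => hh.2.1)

lemma phi_col {t u : ℝ} (h0 : 0 ≤ u) (hu : u < phi D O e v t) : O + t • e + u • v ∈ D := by
  obtain ⟨h, hhA, huh⟩ := exists_lt_of_lt_csSup ⟨0, phiA_zero_mem D O e v t⟩ hu
  exact hhA.2.2 u h0 huh

lemma phi_zero {t : ℝ} (hnt : O + t • e ∉ D) : phi D O e v t = 0 := by
  refine le_antisymm (csSup_le ⟨0, phiA_zero_mem D O e v t⟩ ?_) (phi_nonneg t)
  intro h hh
  by_contra hpos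
  push_neg at hpos
  have h2 := hh.2.2 0 (le_refl 0) hpos
  rw [zero_smul, add_zero] at h2
  exact hnt h2

lemma vert_dist (hv : ‖v‖ = 1) (t u u' : ℝ) :
    dist (O + t • e + u • v) (O + t • e + u' • v) = |u - u'| := by
  rw [dist_eq_norm]
  have h1 : (O + t • e + u • v) - (O + t • e + u' • v) = (u - u') • v := by
    rw [sub_smul]; abel
  rw [h1, norm_smul, hv, mul_one, Real.norm_eq_abs]

lemma horiz_dist (he : ‖e‖ = 1) (t t' u : ℝ) :
    dist (O + t • e + u • v) (O + t' • e + u • v) = |t - t'| := by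
  rw [dist_eq_norm]
  have h1 : (O + t • e + u • v) - (O + t' • e + u • v) = (t - t') • e := by
    rw [sub_smul]; abel
  rw [h1, norm_smul, he, mul_one, Real.norm_eq_abs]

lemma phi_pos (hD : IsOpen D) (hv : ‖v‖ = 1) {t : ℝ} (hmem : O + t • e ∈ D) :
    0 < phi D O e v t := by
  rcases Metric.isOpen_iff.1 hD _ hmem with ⟨ε, hε, hball⟩
  have hmem2 : min 1 (ε/2) ∈
      {h : ℝ | 0 ≤ h ∧ h ≤ 1 ∧ ∀ u : ℝ, 0 ≤ u → u < h → O + t • e + u • v ∈ D} := by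
    refine ⟨by positivity, min_le_left _ _, fun u h0 h1 => hball ?_⟩
    rw [Metric.mem_ball]
    have h3 : dist (O + t • e + u • v) (O + t • e + (0:ℝ) • v) = |u - 0| :=
      vert_dist hv t u 0
    rw [zero_smul, add_zero] at h3
    rw [h3, sub_zero, abs_of_nonneg h0]
    exact lt_of_lt_of_le h1 (le_trans (min_le_right _ _) (by linarith))
  calc (0:ℝ) < min 1 (ε/2) := by positivity
    _ ≤ _ := le_csSup (phiA_bdd D O e v t) hmem2

lemma phi_top (hD : IsOpen D) (hv : ‖v‖ = 1) {t : ℝ} (htop : phi D O e v t < 1) :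
    O + t • e + (phi D O e v t) • v ∉ D := by
  intro hmem
  rcases Metric.isOpen_iff.1 hD _ hmem with ⟨ε, hε, hball⟩
  set φt := phi D O e v t with hφt
  have hφt0 : 0 ≤ φt := phi_nonneg t
  have hmem2 : min 1 (φt + ε/2) ∈
      {h : ℝ | 0 ≤ h ∧ h ≤ 1 ∧ ∀ u : ℝ, 0 ≤ u → u < h → O + t • e + u • v ∈ D} := by
    refine ⟨by positivity, min_le_left _ _, fun u h0 h1 => ?_⟩
    rcases lt_or_ge u φt with hcase | hcase
    · exact phi_col h0 hcase
    · refine hball ?_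
      rw [Metric.mem_ball, vert_dist hv t u φt, abs_of_nonneg (by linarith)]
      have : u < φt + ε/2 := lt_of_lt_of_le h1 (min_le_right _ _)
      linarith
  have hge : φt ≥ min 1 (φt + ε/2) := le_csSup (phiA_bdd D O e v t) hmem2
  rcases le_or_gt 1 (φt + ε/2) with hc | hc
  · rw [min_eq_left hc] at hge; linarith
  · rw [min_eq_right hc.le] at hge; linarith

lemma phi_lsc (hD : IsOpen D) (he : ‖e‖ = 1) {t c : ℝ} (hc : c < phi D O e v t) :
    ∃ ε > 0, ∀ t' : ℝ, |t' - t| < ε → c < phi D O e v t' := by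
  rcases lt_or_ge c 0 with hc0 | hc0
  · exact ⟨1, one_pos, fun t' _ => lt_of_lt_of_le hc0 (phi_nonneg t')⟩
  set h := (c + phi D O e v t)/2 with hh
  have hch : c < h := by rw [hh]; linarith
  have hhφ : h < phi D O e v t := by rw [hh]; linarith
  have hh0 : 0 ≤ h := by linarith
  have hh1 : h ≤ 1 := le_trans hhφ.le (phi_le_one t)
  have hcont : Continuous (fun u : ℝ => O + t • e + u • v) := by
    exact continuous_const.add (continuous_id.smul continuous_const)
  have hKc : IsCompact ((fun u : ℝ => O + t • e + u • v) '' Icc 0 h) :=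
    isCompact_Icc.image hcont
  have hKD : ((fun u : ℝ => O + t • e + u • v) '' Icc 0 h) ⊆ D := by
    rintro z ⟨u, hu, rfl⟩
    exact phi_col hu.1 (lt_of_le_of_lt hu.2 hhφ)
  obtain ⟨ε, hε, hunif⟩ := unif_nbhd hKc hD hKD
  refine ⟨ε, hε, fun t' ht' => ?_⟩
  have hmem2 : h ∈
      {h' : ℝ | 0 ≤ h' ∧ h' ≤ 1 ∧ ∀ u : ℝ, 0 ≤ u → u < h' → O + t' • e + u • v ∈ D} := by
    refine ⟨hh0, hh1, fun u h0 h1 => ?_⟩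
    refine hunif (O + t • e + u • v) ⟨u, ⟨h0, h1.le⟩, rfl⟩ _ ?_
    rw [horiz_dist he t' t u]
    exact ht'
  calc c < h := hch
    _ ≤ phi D O e v t' := le_csSup (phiA_bdd D O e v t') hmem2

noncomputable def psi (D : Set E2) (O e v : E2) (t₁ lam t : ℝ) : ℝ :=
  phi D O e v t - lam * (t - t₁)

lemma psi_sublevel_closed (hD : IsOpen D) (he : ‖e‖ = 1) (t₁ lam c : ℝ) :
    IsClosed {t : ℝ | psi D O e v t₁ lam t ≤ c} := by
  rw [← isOpen_compl_iff]
  rw [Metric.isOpen_iff]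
  intro t ht
  simp only [mem_compl_iff, mem_setOf_eq, not_le, psi] at ht
  set g := lam * (t - t₁) with hg
  have h1 : c + g < phi D O e v t := by linarith
  set c₂ := (c + g + phi D O e v t)/2 with hc₂
  have h2 : c + g < c₂ := by rw [hc₂]; linarith
  have h3 : c₂ < phi D O e v t := by rw [hc₂]; linarith
  obtain ⟨ε₁, hε₁, hlsc⟩ := phi_lsc hD he h3
  set ε₂ := (c₂ - (c + g))/(|lam| + 1) with hε₂
  have hε₂pos : 0 < ε₂ := by rw [hε₂]; exact div_pos (by linarith) (by positivity)
  refine ⟨min ε₁ ε₂, lt_min hε₁ hε₂pos, fun t' ht' => ?_⟩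
  simp only [mem_compl_iff, mem_setOf_eq, not_le, psi]
  rw [mem_ball, Real.dist_eq] at ht'
  rw [lt_min_iff] at ht'
  obtain ⟨ht'a, ht'b⟩ := ht'
  have hA : c₂ < phi D O e v t' := hlsc t' ht'a
  have hB : lam * (t' - t₁) ≤ g + |lam| * |t' - t| := by
    have : lam * (t' - t₁) - g = lam * (t' - t) := by rw [hg]; ring
    have h5 : lam * (t' - t) ≤ |lam| * |t' - t| := by
      calc lam * (t' - t) ≤ |lam * (t' - t)| := le_abs_self _
        _ = |lam| * |t' - t| := abs_mul _ _
    linarith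
  have hC : |lam| * |t' - t| < c₂ - (c + g) := by
    have h6 : |t' - t| < ε₂ := ht'b
    have h7 : |lam| * |t' - t| ≤ |lam| * ε₂ := by
      apply mul_le_mul_of_nonneg_left h6.le (abs_nonneg _)
    have h8 : |lam| * ε₂ < c₂ - (c + g) := by
      rw [hε₂]
      rw [div_eq_inv_mul, ← mul_assoc]
      have h9 : |lam| * (|lam| + 1)⁻¹ < 1 := by
        rw [mul_inv_lt_iff₀ (by positivity)]
        linarith [abs_nonneg lam]
      nlinarith [sub_pos.2 h2]
    linarith
  linarith

lemma psi_attains (hD : IsOpen D) (he : ‖e‖ = 1) (t₁ t₂ lam : ℝ) (ht : t₁ ≤ t₂) :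
    ∃ ts ∈ Icc t₁ t₂, ∀ t ∈ Icc t₁ t₂, psi D O e v t₁ lam ts ≤ psi D O e v t₁ lam t := by
  set img := psi D O e v t₁ lam '' Icc t₁ t₂ with himg
  have hne : img.Nonempty := ⟨_, ⟨t₁, ⟨le_refl _, ht⟩, rfl⟩⟩
  have hbdd : BddBelow img := by
    refine ⟨-(|lam| * (t₂ - t₁)), ?_⟩
    rintro z ⟨t, htmem, rfl⟩
    have h1 : 0 ≤ phi D O e v t := phi_nonneg t
    have h2 : lam * (t - t₁) ≤ |lam| * (t₂ - t₁) := by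
      calc lam * (t - t₁) ≤ |lam * (t - t₁)| := le_abs_self _
        _ = |lam| * |t - t₁| := abs_mul _ _
        _ ≤ |lam| * (t₂ - t₁) := by
            apply mul_le_mul_of_nonneg_left _ (abs_nonneg _)
            rw [abs_of_nonneg (by linarith [htmem.1])]
            linarith [htmem.2]
    simp only [psi]
    linarith
  set m := sInf img with hm
  set S : ℕ → Set ℝ := fun n => Icc t₁ t₂ ∩ {t | psi D O e v t₁ lam t ≤ m + 1/(n+1)} with hS
  have hSclosed : ∀ n, IsClosed (S n) :=
    fun n => isClosed_Icc.inter (psi_sublevel_closed hD he t₁ lam _)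
  have hSne : ∀ n, (S n).Nonempty := by
    intro n
    have h1 : m < m + 1/(n+1) := by
      have : (0:ℝ) < 1/(n+1) := by positivity
      linarith
    obtain ⟨z, hz, hzlt⟩ := exists_lt_of_csInf_lt hne h1
    rcases hz with ⟨t, htmem, rfl⟩
    exact ⟨t, htmem, hzlt.le⟩
  have hSanti : ∀ n, S (n+1) ⊆ S n := by
    intro n z hz
    refine ⟨hz.1, ?_⟩
    have h2 := hz.2
    simp only [mem_setOf_eq] at h2 ⊢
    have h1 : (1:ℝ)/((n:ℝ)+1+1) ≤ 1/((n:ℝ)+1) := by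
      apply div_le_div_of_nonneg_left one_pos.le (by positivity)
      linarith
    push_cast at h2 ⊢
    linarith
  have hScomp : IsCompact (S 0) :=
    isCompact_Icc.of_isClosed_subset (hSclosed 0) (inter_subset_left)
  obtain ⟨ts, hts⟩ := IsCompact.nonempty_iInter_of_sequence_nonempty_isCompact_isClosed
    S hSanti hSne hScomp hSclosed
  simp only [mem_iInter] at hts
  have htsIcc : ts ∈ Icc t₁ t₂ := (hts 0).1
  refine ⟨ts, htsIcc, fun t htmem => ?_⟩
  have h1 : psi D O e v t₁ lam ts ≤ m := by
    by_contra hgt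
    push_neg at hgt
    obtain ⟨n, hn⟩ := exists_nat_one_div_lt (sub_pos.2 hgt)
    have h2 := (hts n).2
    simp only [mem_setOf_eq] at h2
    push_cast at hn h2
    linarith
  calc psi D O e v t₁ lam ts ≤ m := h1
    _ ≤ psi D O e v t₁ lam t := csInf_le hbdd ⟨t, htmem, rfl⟩

lemma exists_singleton_lam (lb : ℝ) (hl : 0 < lb) (Mset : ℝ → Set ℝ)
    (hInf : ∀ lam ∈ Ioo 0 lb, sInf (Mset lam) ∈ Mset lam)
    (hSup : ∀ lam ∈ Ioo 0 lb, sSup (Mset lam) ∈ Mset lam)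
    (hbddB : ∀ lam ∈ Ioo 0 lb, BddBelow (Mset lam))
    (hbddA : ∀ lam ∈ Ioo 0 lb, BddAbove (Mset lam))
    (horder : ∀ lam lam', lam ∈ Ioo 0 lb → lam' ∈ Ioo 0 lb → lam < lam' →
      ∀ t ∈ Mset lam, ∀ t' ∈ Mset lam', t ≤ t') :
    ∃ lam ∈ Ioo 0 lb, ∀ t ∈ Mset lam, ∀ t' ∈ Mset lam, t = t' := by
  by_contra hbad
  push_neg at hbad
  have hlt : ∀ lam ∈ Ioo 0 lb, sInf (Mset lam) < sSup (Mset lam) := by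
    intro lam hlam
    obtain ⟨t, htm, t', ht'm, htne⟩ := hbad lam hlam
    rcases lt_or_ge (sInf (Mset lam)) (sSup (Mset lam)) with h | h
    · exact h
    · exfalso
      have h1 : t ≤ sSup (Mset lam) := le_csSup (hbddA lam hlam) htm
      have h2 : sInf (Mset lam) ≤ t := csInf_le (hbddB lam hlam) htm
      have h3 : t' ≤ sSup (Mset lam) := le_csSup (hbddA lam hlam) ht'm
      have h4 : sInf (Mset lam) ≤ t' := csInf_le (hbddB lam hlam) ht'm
      exact htne (by linarith)
  have hq : ∀ lam, lam ∈ Ioo 0 lb → ∃ q : ℚ, sInf (Mset lam) < (q:ℝ) ∧ (q:ℝ) < sSup (Mset lam) :=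
    fun lam hlam => exists_rat_btwn (hlt lam hlam)
  choose qf hq1 hq2 using hq
  classical
  set f : ℝ → ℕ := fun lam =>
    if h : lam ∈ Ioo 0 lb then Encodable.encode (qf lam h) else 0 with hf
  have hinj : InjOn f (Ioo 0 lb) := by
    intro lam hlam lam' hlam' hfeq
    by_contra hne
    rcases lt_or_gt_of_ne hne with hlt' | hlt'
    · have hchain : (qf lam hlam : ℝ) < (qf lam' hlam' : ℝ) := by
        have hA := hq2 lam hlam
        have hB := hq1 lam' hlam'
        have hC : sSup (Mset lam) ≤ sInf (Mset lam') :=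
          horder lam lam' hlam hlam' hlt' _ (hSup lam hlam) _ (hInf lam' hlam')
        linarith
      have : qf lam hlam ≠ qf lam' hlam' := by
        intro hq'; rw [hq'] at hchain; exact lt_irrefl _ hchain
      apply this
      have hfl : f lam = Encodable.encode (qf lam hlam) := by rw [hf]; simp [hlam]
      have hfl' : f lam' = Encodable.encode (qf lam' hlam') := by rw [hf]; simp [hlam']
      have := hfeq
      rw [hfl, hfl'] at this
      exact Encodable.encode_injective this
    · have hchain : (qf lam' hlam' : ℝ) < (qf lam hlam : ℝ) := by
        have hA := hq2 lam' hlam'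
        have hB := hq1 lam hlam
        have hC : sSup (Mset lam') ≤ sInf (Mset lam) :=
          horder lam' lam hlam' hlam hlt' _ (hSup lam' hlam') _ (hInf lam hlam)
        linarith
      have : qf lam' hlam' ≠ qf lam hlam := by
        intro hq'; rw [hq'] at hchain; exact lt_irrefl _ hchain
      apply this
      have hfl : f lam = Encodable.encode (qf lam hlam) := by rw [hf]; simp [hlam]
      have hfl' : f lam' = Encodable.encode (qf lam' hlam') := by rw [hf]; simp [hlam']
      have := hfeq
      rw [hfl, hfl'] at this
      exact (Encodable.encode_injective this).symm
  have hcount : (Ioo (0:ℝ) lb).Countable := Set.countable_iff_exists_injOn.2 ⟨f, hinj⟩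
  have hvol0 : MeasureTheory.volume (Ioo (0:ℝ) lb) = 0 :=
    Set.Countable.measure_zero hcount _
  rw [Real.volume_Ioo] at hvol0
  have : (0:ℝ) < lb - 0 := by linarith
  rw [← ENNReal.ofReal_pos] at this
  simp only [sub_zero] at hvol0 this
  rw [hvol0] at this
  exact lt_irrefl _ this

set_option maxHeartbeats 1600000 in
lemma column_main {D : Set E2} (hD : IsOpen D) (O e v : E2)
    (he : ‖e‖ = 1) (hv : ‖v‖ = 1) (hev : ⟪e, v⟫ = 0)
    (t₁ t₂ η : ℝ) (ht : t₁ < t₂) (hη : 0 < η)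
    (hband : ∀ t, t₁ ≤ t → t ≤ t₂ → ∀ u : ℝ, -η < u → u < 0 → O + t • e + u • v ∈ D)
    (hb2 : O + t₂ • e ∈ D)
    (τ₀ : ℝ) (hτ1 : t₁ < τ₀) (hτ2 : τ₀ < t₂) (hτD : O + τ₀ • e ∉ D) :
    ∃ y ∈ frontier D, ∃ P : Set E2,
      (∃ n : E2, ‖n‖ = 1 ∧ ∃ c : ℝ, P = {x : E2 | ⟪x, n⟫ ≤ c}) ∧
      y ∈ frontier P ∧
      ∃ r > 0,
        P ∩ (closure (Metric.ball y r) \ {y}) ⊆ D ∧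
        (frontier D \ {y}) ∩ Metric.ball y r ⊆ Pᶜ := by
  classical
  have hee : ⟪e, e⟫ = (1:ℝ) := by rw [real_inner_self_eq_norm_sq, he]; norm_num
  have hvv : ⟪v, v⟫ = (1:ℝ) := by rw [real_inner_self_eq_norm_sq, hv]; norm_num
  have hve : ⟪v, e⟫ = (0:ℝ) := by rw [real_inner_comm]; exact hev
  -- minimizer sets
  set Mset : ℝ → Set ℝ := fun lam =>
    {t | t ∈ Icc t₁ t₂ ∧ ∀ t' ∈ Icc t₁ t₂, psi D O e v t₁ lam t ≤ psi D O e v t₁ lam t'}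
    with hMset
  have hMne : ∀ lam, (Mset lam).Nonempty := by
    intro lam
    obtain ⟨ts, hts1, hts2⟩ := psi_attains hD he t₁ t₂ lam ht.le
    exact ⟨ts, hts1, hts2⟩
  have hMclosed : ∀ lam, IsClosed (Mset lam) := by
    intro lam
    have : Mset lam = Icc t₁ t₂ ∩ ⋂ t' ∈ Icc t₁ t₂,
        {t | psi D O e v t₁ lam t ≤ psi D O e v t₁ lam t'} := by
      ext z
      simp only [hMset, mem_setOf_eq, mem_inter_iff, mem_iInter]
    rw [this]
    exact isClosed_Icc.inter (isClosed_biInter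
      (fun t' _ => psi_sublevel_closed hD he t₁ lam _))
  have hMbddB : ∀ lam, BddBelow (Mset lam) := fun lam => ⟨t₁, fun z hz => hz.1.1⟩
  have hMbddA : ∀ lam, BddAbove (Mset lam) := fun lam => ⟨t₂, fun z hz => hz.1.2⟩
  have horder : ∀ lam lam' : ℝ, lam < lam' →
      ∀ t ∈ Mset lam, ∀ t' ∈ Mset lam', t ≤ t' := by
    intro lam lam' hll t htm t' ht'm
    have h1 := htm.2 t' ht'm.1
    have h2 := ht'm.2 t htm.1
    simp only [psi] at h1 h2
    by_contra hcon
    push_neg at hcon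
    nlinarith [mul_pos (sub_pos.2 hll) (sub_pos.2 hcon)]
  have hφt₂pos : 0 < phi D O e v t₂ := phi_pos hD hv hb2
  set lb : ℝ := min (phi D O e v t₂ / (2*(t₂ - t₁))) (1/(2*(t₂ - t₁))) with hlb
  have hlbpos : 0 < lb := by
    apply lt_min
    · apply div_pos hφt₂pos; linarith
    · apply div_pos one_pos; linarith
  obtain ⟨lam, hlam, huniq⟩ := exists_singleton_lam lb hlbpos Mset
    (fun l hl => (hMclosed l).csInf_mem (hMne l) (hMbddB l))
    (fun l hl => (hMclosed l).csSup_mem (hMne l) (hMbddA l))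
    (fun l _ => hMbddB l)
    (fun l _ => hMbddA l)
    (fun l l' _ _ h => horder l l' h)
  set ts : ℝ := sInf (Mset lam) with hts
  have htsm : ts ∈ Mset lam := (hMclosed lam).csInf_mem (hMne lam) (hMbddB lam)
  have htsIcc : ts ∈ Icc t₁ t₂ := htsm.1
  have hmin : ∀ t ∈ Icc t₁ t₂, psi D O e v t₁ lam ts ≤ psi D O e v t₁ lam t := htsm.2
  have hstrict : ∀ t ∈ Icc t₁ t₂, t ≠ ts →
      psi D O e v t₁ lam ts < psi D O e v t₁ lam t := by
    intro t htIcc htne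
    rcases lt_or_ge (psi D O e v t₁ lam ts) (psi D O e v t₁ lam t) with h | h
    · exact h
    · exfalso
      apply htne
      have htm : t ∈ Mset lam := ⟨htIcc, fun t' ht' => le_trans h (hmin t' ht')⟩
      exact huniq t htm ts htsm
  -- the obstruction column
  have hφτ₀ : phi D O e v τ₀ = 0 := phi_zero hτD
  have hτIcc : τ₀ ∈ Icc t₁ t₂ := ⟨hτ1.le, hτ2.le⟩
  have hψτ₀ : psi D O e v t₁ lam τ₀ < 0 := by
    simp only [psi, hφτ₀]
    have : 0 < lam * (τ₀ - t₁) := mul_pos hlam.1 (by linarith)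
    linarith
  have hψts : psi D O e v t₁ lam ts < 0 := lt_of_le_of_lt (hmin τ₀ hτIcc) hψτ₀
  have hts1 : t₁ < ts := by
    rcases lt_or_eq_of_le htsIcc.1 with h | h
    · exact h
    · exfalso
      have : psi D O e v t₁ lam t₁ = phi D O e v t₁ - lam * (t₁ - t₁) := rfl
      rw [← h] at hψts
      simp only [psi] at hψts
      have h2 := phi_nonneg (D := D) (O := O) (e := e) (v := v) t₁
      nlinarith
  have hts2 : ts < t₂ := by
    rcases lt_or_eq_of_le htsIcc.2 with h | h
    · exact h
    · exfalso
      have h1 : psi D O e v t₁ lam t₂ = phi D O e v t₂ - lam * (t₂ - t₁) := rfl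
      have h2 : lam * (t₂ - t₁) < phi D O e v t₂ / 2 := by
        have h3 : lam < phi D O e v t₂ / (2*(t₂ - t₁)) :=
          lt_of_lt_of_le hlam.2 (min_le_left _ _)
        have h4 : 0 < t₂ - t₁ := by linarith
        rw [div_eq_inv_mul, lt_inv_mul_iff₀ (by positivity)] at h3
        nlinarith
      rw [h] at hψts
      rw [h1] at hψts
      linarith
  set φs : ℝ := phi D O e v ts with hφs
  have hφs0 : 0 ≤ φs := phi_nonneg ts
  have hφs1 : φs < 1/2 := by
    have h1 : φs = psi D O e v t₁ lam ts + lam * (ts - t₁) := by simp [psi, hφs]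
    have h2 : lam * (ts - t₁) ≤ lam * (t₂ - t₁) := by
      apply mul_le_mul_of_nonneg_left _ hlam.1.le
      linarith
    have h3 : lam * (t₂ - t₁) < 1/2 := by
      have h4 : lam < 1/(2*(t₂ - t₁)) := lt_of_lt_of_le hlam.2 (min_le_right _ _)
      have h5 : 0 < t₂ - t₁ := by linarith
      rw [div_eq_inv_mul, lt_inv_mul_iff₀ (by positivity)] at h4
      nlinarith
    linarith
  set y : E2 := O + ts • e + φs • v with hy
  have hyD : y ∉ D := phi_top hD hv (by linarith)
  -- the half-plane
  set w : E2 := v - lam • e with hw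
  have hww : ⟪w, w⟫ = 1 + lam^2 := by
    rw [hw, inner_sub_left, inner_sub_right, inner_sub_right, real_inner_smul_left,
      real_inner_smul_left, real_inner_smul_right, real_inner_smul_right, hee, hvv, hev, hve]
    ring
  have hnw : ‖w‖ = Real.sqrt (1 + lam^2) := by
    have h1 : ‖w‖^2 = 1 + lam^2 := by rw [← real_inner_self_eq_norm_sq]; exact hww
    rw [← h1, Real.sqrt_sq (norm_nonneg w)]
  set s0 : ℝ := Real.sqrt (1 + lam^2) with hs0
  have hs0pos : 0 < s0 := Real.sqrt_pos.2 (by positivity)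
  set n : E2 := s0⁻¹ • w with hn
  have hnorm : ‖n‖ = 1 := by
    rw [hn, norm_smul, Real.norm_eq_abs, abs_of_pos (inv_pos.2 hs0pos), hnw]
    field_simp
  set c : ℝ := ⟪y, n⟫ with hc
  set P : Set E2 := {x : E2 | ⟪x, n⟫ ≤ c} with hP
  -- coordinates
  have hyO : y - O = ts • e + φs • v := by rw [hy]; abel
  have hcoord_e : ∀ x : E2, ⟪x - y, e⟫ = ⟪x - O, e⟫ - ts := by
    intro x
    have h1 : x - y = (x - O) - (y - O) := by abel
    rw [h1, inner_sub_left, hyO, inner_add_left, real_inner_smul_left,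
      real_inner_smul_left, hee, hve]
    ring
  have hcoord_v : ∀ x : E2, ⟪x - y, v⟫ = ⟪x - O, v⟫ - φs := by
    intro x
    have h1 : x - y = (x - O) - (y - O) := by abel
    rw [h1, inner_sub_left, hyO, inner_add_left, real_inner_smul_left,
      real_inner_smul_left, hvv, hev]
    ring
  have hPiff : ∀ x : E2, x ∈ P ↔
      (⟪x - O, v⟫ - φs) - lam * (⟪x - O, e⟫ - ts) ≤ 0 := by
    intro x
    have h1 : ⟪x - y, w⟫ = (⟪x - O, v⟫ - φs) - lam * (⟪x - O, e⟫ - ts) := by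
      rw [hw, inner_sub_right, real_inner_smul_right, hcoord_e x, hcoord_v x]
    have h2 : (x ∈ P) ↔ ⟪x - y, n⟫ ≤ 0 := by
      rw [hP, mem_setOf_eq, hc, ← sub_nonpos, ← inner_sub_left]
    rw [h2, hn, real_inner_smul_right, ← h1]
    have h4 : 0 < s0⁻¹ := inv_pos.2 hs0pos
    constructor
    · intro h3
      by_contra hpos
      push_neg at hpos
      have h5 : 0 < s0⁻¹ * ⟪x - y, w⟫ := mul_pos h4 hpos
      linarith
    · intro h3
      exact mul_nonpos_iff.2 (Or.inl ⟨h4.le, h3⟩)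
  -- decomposition
  have hdec : ∀ x : E2, x = O + ⟪x - O, e⟫ • e + ⟪x - O, v⟫ • v := by
    intro x
    have h1 := decomp he hv hev (x - O)
    have h2 : O + (x - O) = x := by abel
    calc x = O + (x - O) := h2.symm
      _ = O + (⟪x - O, e⟫ • e + ⟪x - O, v⟫ • v) := congrArg (fun z => O + z) h1
      _ = O + ⟪x - O, e⟫ • e + ⟪x - O, v⟫ • v := by rw [add_assoc]
  -- radius
  set ρ : ℝ := min (min (ts - t₁) (t₂ - ts)) (min η (1 - φs)) / 2 with hρ
  have hρpos : 0 < ρ := by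
    rw [hρ]
    have h1 : 0 < min (ts - t₁) (t₂ - ts) := lt_min (by linarith) (by linarith)
    have h2 : 0 < min η (1 - φs) := lt_min hη (by linarith)
    positivity
  have hρa : ρ ≤ (ts - t₁)/2 := by
    rw [hρ]
    have := min_le_left (min (ts - t₁) (t₂ - ts)) (min η (1 - φs))
    have := min_le_left (ts - t₁) (t₂ - ts)
    linarith
  have hρb : ρ ≤ (t₂ - ts)/2 := by
    rw [hρ]
    have := min_le_left (min (ts - t₁) (t₂ - ts)) (min η (1 - φs))
    have := min_le_right (ts - t₁) (t₂ - ts)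
    linarith
  have hρc : ρ ≤ η/2 := by
    rw [hρ]
    have := min_le_right (min (ts - t₁) (t₂ - ts)) (min η (1 - φs))
    have := min_le_left η (1 - φs)
    linarith
  -- main inclusion
  have hmain : ∀ x : E2, x ∈ P → dist x y ≤ ρ → x ≠ y → x ∈ D := by
    intro x hxP hxd hxy
    set tx : ℝ := ⟪x - O, e⟫ with htx
    set ux : ℝ := ⟪x - O, v⟫ with hux
    have hxdec : x = O + tx • e + ux • v := hdec x
    have habs_e : |tx - ts| ≤ ρ := by
      have h1 : ⟪x - y, e⟫ = tx - ts := hcoord_e x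
      calc |tx - ts| = |⟪x - y, e⟫| := by rw [h1]
        _ ≤ ‖x - y‖ * ‖e‖ := abs_real_inner_le_norm _ _
        _ = dist x y := by rw [he, mul_one, dist_eq_norm]
        _ ≤ ρ := hxd
    have habs_v : |ux - φs| ≤ ρ := by
      have h1 : ⟪x - y, v⟫ = ux - φs := hcoord_v x
      calc |ux - φs| = |⟪x - y, v⟫| := by rw [h1]
        _ ≤ ‖x - y‖ * ‖v‖ := abs_real_inner_le_norm _ _
        _ = dist x y := by rw [hv, mul_one, dist_eq_norm]
        _ ≤ ρ := hxd
    rw [abs_le] at habs_e habs_v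
    have htxIcc : tx ∈ Icc t₁ t₂ := by
      constructor
      · nlinarith [habs_e.1]
      · nlinarith [habs_e.2]
    have hux1 : -η < ux := by nlinarith [habs_v.1]
    have hPx := (hPiff x).1 hxP
    rw [← htx, ← hux] at hPx
    have hkey : ux < phi D O e v tx ∨ (tx = ts ∧ ux < φs) := by
      rcases eq_or_ne tx ts with hcase | hcase
      · right
        refine ⟨hcase, ?_⟩
        rcases lt_or_eq_of_le (by rw [hcase] at hPx; linarith : ux ≤ φs) with h | h
        · exact h
        · exfalso
          apply hxy
          rw [hxdec, hcase, h, ← hy]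
      · left
        have h1 := hstrict tx htxIcc hcase
        simp only [psi] at h1
        nlinarith
    rcases hkey with hkey | ⟨hcase, hkey⟩
    · rcases le_or_gt 0 ux with h0 | h0
      · rw [hxdec]; exact phi_col h0 hkey
      · rw [hxdec]; exact hband tx htxIcc.1 htxIcc.2 ux hux1 h0
    · rcases le_or_gt 0 ux with h0 | h0
      · rw [hxdec, hcase]; exact phi_col h0 (by rw [← hφs]; exact hkey)
      · rw [hxdec]; exact hband tx htxIcc.1 htxIcc.2 ux hux1 h0
  -- frontier D
  have hyfr : y ∈ frontier D := by
    rw [hD.frontier_eq]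
    refine ⟨Metric.mem_closure_iff.2 fun ε hε => ?_, hyD⟩
    set d : ℝ := min ε η / 2 with hd
    have hdpos : 0 < d := by rw [hd]; positivity
    have hdη : d ≤ η/2 := by
      rw [hd]
      have := min_le_right ε η
      linarith
    have hdε : d < ε := by
      rw [hd]
      have := min_le_left ε η
      linarith
    refine ⟨O + ts • e + (φs - d) • v, ?_, ?_⟩
    · rcases le_or_gt 0 (φs - d) with h0 | h0
      · exact phi_col h0 (by rw [← hφs]; linarith)
      · exact hband ts htsIcc.1 htsIcc.2 _ (by linarith) h0
    · rw [hy, vert_dist hv]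
      rw [abs_of_nonneg (by linarith)]
      linarith
  -- frontier P
  have hPclosed : IsClosed P := by
    rw [hP]
    exact isClosed_le (Continuous.inner continuous_id continuous_const) continuous_const
  have hnn : ⟪n, n⟫ = (1:ℝ) := by rw [real_inner_self_eq_norm_sq, hnorm]; norm_num
  have hyfrP : y ∈ frontier P := by
    have hfr : frontier P = closure P \ interior P := rfl
    rw [hfr]
    constructor
    · exact subset_closure (le_refl c)
    · intro hyint
      rcases Metric.mem_nhds_iff.1 (mem_interior_iff_mem_nhds.1 hyint) with ⟨ε, hε, hball⟩
      have hz : y + (ε/2) • n ∈ Metric.ball y ε := by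
        rw [Metric.mem_ball, dist_eq_norm]
        have h1 : y + (ε/2) • n - y = (ε/2) • n := by abel
        rw [h1, norm_smul, hnorm, mul_one, Real.norm_eq_abs, abs_of_pos (by linarith)]
        linarith
      have hzP := hball hz
      rw [hP, mem_setOf_eq, inner_add_left, real_inner_smul_left, hnn] at hzP
      rw [hc] at hzP
      linarith
  -- conclusions
  refine ⟨y, hyfr, P, ⟨n, hnorm, c, rfl⟩, hyfrP, ρ, hρpos, ?_, ?_⟩
  · intro x hx
    have hxP := hx.1
    have hxcl := hx.2.1
    have hxne := hx.2.2
    rw [closure_ball y (ne_of_gt hρpos), Metric.mem_closedBall] at hxcl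
    exact hmain x hxP hxcl (by simpa using hxne)
  · rintro x ⟨⟨hxfr, hxne⟩, hxball⟩
    intro hxP
    have hxD : x ∉ D := by
      rw [hD.frontier_eq] at hxfr
      exact hxfr.2
    apply hxD
    apply hmain x hxP (le_of_lt (Metric.mem_ball.1 hxball)) (by simpa using hxne)

/-- The blocked-sweep configuration: a line with a `D`-band below it,
endpoints of a window on the line in `D`, and a non-`D` point inside the window. -/
def Config (D : Set E2) : Prop :=
  ∃ (O e v : E2) (t₁ t₂ η τ₀ : ℝ),
    ‖e‖ = 1 ∧ ‖v‖ = 1 ∧ ⟪e, v⟫ = 0 ∧ t₁ < t₂ ∧ 0 < η ∧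
    (∀ t, t₁ ≤ t → t ≤ t₂ → ∀ u : ℝ, -η < u → u < 0 → O + t • e + u • v ∈ D) ∧
    (O + t₂ • e ∈ D) ∧ t₁ < τ₀ ∧ τ₀ < t₂ ∧ (O + τ₀ • e ∉ D)

lemma config_main {D : Set E2} (hD : IsOpen D) (hcfg : Config D) :
    ∃ y ∈ frontier D, ∃ P : Set E2,
      (∃ n : E2, ‖n‖ = 1 ∧ ∃ c : ℝ, P = {x : E2 | ⟪x, n⟫ ≤ c}) ∧
      y ∈ frontier P ∧
      ∃ r > 0,
        P ∩ (closure (Metric.ball y r) \ {y}) ⊆ D ∧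
        (frontier D \ {y}) ∩ Metric.ball y r ⊆ Pᶜ := by
  obtain ⟨O, e, v, t₁, t₂, η, τ₀, he, hv, hev, ht, hη, hband, hb2, h1, h2, h3⟩ := hcfg
  exact column_main hD O e v he hv hev t₁ t₂ η ht hη hband hb2 τ₀ h1 h2 h3

set_option maxHeartbeats 4000000 in
lemma tri {D : Set E2} (hD : IsOpen D) {p q r : E2}
    (hp : p ∈ D)
    (hpq : segment ℝ p q ⊆ D) (hqr : segment ℝ q r ⊆ D) :
    segment ℝ p r ⊆ D ∨ Config D := by
  classical
  set m : ℝ → E2 := fun s => q + s • (r - q) with hm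
  have hm0 : m 0 = q := by rw [hm]; simp
  have hm1 : m 1 = r := by rw [hm]; simp
  set S : Set ℝ := {s | 0 ≤ s ∧ s ≤ 1 ∧ ∀ σ, 0 ≤ σ → σ ≤ s → segment ℝ p (m σ) ⊆ D}
    with hS
  have h0S : (0:ℝ) ∈ S := by
    refine ⟨le_refl 0, zero_le_one, fun σ h0 h1 => ?_⟩
    have hσ0 : σ = 0 := le_antisymm h1 h0
    rw [hσ0, hm0]
    exact hpq
  have hbdd : BddAbove S := ⟨1, fun z hz => hz.2.1⟩
  set s' : ℝ := sSup S with hs'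
  have hs'0 : 0 ≤ s' := le_csSup hbdd h0S
  have hs'1 : s' ≤ 1 := csSup_le ⟨0, h0S⟩ (fun z hz => hz.2.1)
  have hbelow : ∀ σ, 0 ≤ σ → σ < s' → segment ℝ p (m σ) ⊆ D := by
    intro σ h0 hσ
    obtain ⟨z, hzS, hz⟩ := exists_lt_of_lt_csSup ⟨0, h0S⟩ hσ
    exact hzS.2.2 σ h0 hz.le
  have hmqr : ∀ s : ℝ, 0 ≤ s → s ≤ 1 → m s ∈ D := by
    intro s h0 h1
    apply hqr
    rw [segment_eq_image']
    exact ⟨s, ⟨h0, h1⟩, rfl⟩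
  by_cases hyes : segment ℝ p (m s') ⊆ D
  · left
    have hsS : s' ∈ S := by
      refine ⟨hs'0, hs'1, fun σ h0 h1 => ?_⟩
      rcases lt_or_eq_of_le h1 with h | h
      · exact hbelow σ h0 h
      · rw [h]; exact hyes
    have hcomp : IsCompact (segment ℝ p (m s')) := by
      rw [segment_eq_image']
      exact isCompact_Icc.image
        (continuous_const.add (continuous_id.smul continuous_const))
    by_cases hs1 : s' = 1
    · intro z hz
      rw [hs1, hm1] at hyes
      exact hyes hz
    · exfalso
      have hs1' : s' < 1 := lt_of_le_of_ne hs'1 hs1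
      obtain ⟨ε, hε, hunif⟩ := unif_nbhd hcomp hD hyes
      set δ : ℝ := min (1 - s') (ε / (‖r - q‖ + 1)) with hδ
      have hδpos : 0 < δ := lt_min (by linarith) (by positivity)
      have hnew : s' + δ ∈ S := by
        refine ⟨by linarith, ?_, fun σ h0 h1 => ?_⟩
        · have := min_le_left (1 - s') (ε / (‖r - q‖ + 1))
          rw [hδ]; linarith [min_le_left (1 - s') (ε / (‖r - q‖ + 1))]
        rcases le_or_gt σ s' with hc | hc
        · exact hsS.2.2 σ h0 hc
        · intro z hz
          rw [segment_eq_image'] at hz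
          obtain ⟨θ, hθ, rfl⟩ := hz
          refine hunif (p + θ • (m s' - p))
            (by rw [segment_eq_image']; exact ⟨θ, hθ, rfl⟩) _ ?_
          have hdiff : (p + θ • (m σ - p)) - (p + θ • (m s' - p))
              = (θ * (σ - s')) • (r - q) := by
            rw [show m σ = q + σ • (r - q) from rfl, show m s' = q + s' • (r - q) from rfl]
            module
          rw [dist_eq_norm, hdiff, norm_smul, Real.norm_eq_abs]
          have hσδ : σ - s' ≤ δ := by linarith
          have habs : |θ * (σ - s')| ≤ δ := by
            rw [abs_mul, abs_of_nonneg hθ.1, abs_of_nonneg (by linarith : (0:ℝ) ≤ σ - s')]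
            calc θ * (σ - s') ≤ 1 * (σ - s') := by
                  apply mul_le_mul_of_nonneg_right hθ.2 (by linarith)
              _ = σ - s' := one_mul _
              _ ≤ δ := hσδ
          have hδε : δ * (‖r - q‖ + 1) ≤ ε := by
            have h6 : δ ≤ ε / (‖r - q‖ + 1) := by rw [hδ]; exact min_le_right _ _
            rw [← le_div_iff₀ (by positivity)]
            exact h6
          calc |θ * (σ - s')| * ‖r - q‖ ≤ δ * ‖r - q‖ := by
                apply mul_le_mul_of_nonneg_right habs (norm_nonneg _)
            _ < δ * (‖r - q‖ + 1) := by nlinarith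
            _ ≤ ε := hδε
      have hle : s' + δ ≤ s' := le_csSup hbdd hnew
      linarith
  · right
    obtain ⟨z, hzseg, hzD⟩ := Set.not_subset.1 hyes
    have hs'pos : 0 < s' := by
      rcases lt_or_eq_of_le hs'0 with h | h
      · exact h
      · exfalso
        apply hyes
        rw [← h, hm0]
        exact hpq
    have hms'D : m s' ∈ D := hmqr s' hs'0 hs'1
    have hMp : m s' ≠ p := by
      intro hcon
      apply hzD
      rw [hcon, segment_same] at hzseg
      rw [hzseg]
      exact hp
    set M : ℝ := ‖m s' - p‖ with hM
    have hMpos : 0 < M := by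
      rw [hM, norm_pos_iff]
      exact sub_ne_zero.2 hMp
    set e : E2 := M⁻¹ • (m s' - p) with he'
    have he : ‖e‖ = 1 := by
      rw [he', norm_smul, Real.norm_eq_abs, abs_of_pos (inv_pos.2 hMpos), ← hM]
      field_simp
    have hMe : M • e = m s' - p := by
      rw [he', smul_smul]
      rw [mul_inv_cancel₀ (ne_of_gt hMpos), one_smul]
    have hee : ⟪e, e⟫ = (1:ℝ) := by rw [real_inner_self_eq_norm_sq, he]; norm_num
    set γ : ℝ := ⟪r - q, e⟫ with hγ
    set n0 : E2 := (r - q) - γ • e with hn0def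
    -- segment points in terms of e
    have hseg_pt : ∀ z' ∈ segment ℝ p (m s'), ∃ t : ℝ, 0 ≤ t ∧ t ≤ M ∧ z' = p + t • e := by
      intro z' hz'
      rw [segment_eq_image'] at hz'
      obtain ⟨θ, hθ, rfl⟩ := hz'
      refine ⟨θ * M, mul_nonneg hθ.1 hMpos.le, ?_, ?_⟩
      · nlinarith [hθ.2, hMpos]
      · rw [he', smul_smul]
        have hθM : θ * M * M⁻¹ = θ := by field_simp
        rw [hθM]
    have hms'e : m s' = p + M • e := by rw [hMe]; abel
    by_cases hn0 : n0 = 0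
    · -- degenerate: r - q parallel to e; then the sweep cannot be blocked
      exfalso
      apply hyes
      have hrq : r - q = γ • e := by
        have h5 : (r - q) - γ • e = 0 := by rw [← hn0def]; exact hn0
        exact sub_eq_zero.1 h5
      intro z' hz'
      obtain ⟨t, ht0, htM, rfl⟩ := hseg_pt z' hz'
      have hmσ : ∀ σ : ℝ, m σ = p + (M - (s' - σ) * γ) • e := by
        intro σ
        have h5 : m σ = m s' - (s' - σ) • (r - q) := by
          rw [show m σ = q + σ • (r - q) from rfl, show m s' = q + s' • (r - q) from rfl]
          module
        rw [h5, hrq, hms'e]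
        module
      rcases eq_or_lt_of_le htM with htM' | htM'
      · have h6 : p + t • e = m s' := by rw [htM', hms'e]
        rw [h6]
        exact hms'D
      · rcases le_or_gt γ 0 with hγ0 | hγ0
        · have hγhalf : (s' - s'/2) * γ ≤ 0 :=
            mul_nonpos_iff.2 (Or.inl ⟨by linarith, hγ0⟩)
          have hEpos : 0 < M - (s' - s'/2) * γ := by linarith
          have hE : M ≤ M - (s' - s'/2) * γ := by linarith
          apply hbelow (s'/2) (by linarith) (by linarith)
          rw [segment_eq_image']
          refine ⟨t / (M - (s' - s'/2) * γ), ⟨div_nonneg ht0 hEpos.le, ?_⟩, ?_⟩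
          · rw [div_le_one hEpos]; linarith
          · show p + (t / (M - (s' - s'/2) * γ)) • (m (s'/2) - p) = p + t • e
            rw [hmσ (s'/2)]
            have h7 : p + (M - (s' - s'/2) * γ) • e - p = (M - (s' - s'/2) * γ) • e := by
              abel
            rw [h7, smul_smul, div_mul_cancel₀ t (ne_of_gt hEpos)]
        · rcases le_or_gt (s' * γ) (M - t) with hc | hc
          · rcases eq_or_lt_of_le (show (0:ℝ) ≤ M - s' * γ by linarith) with hE0 | hE0
            · have ht' : t = 0 := by linarith
              rw [ht']
              simpa using hp
            · apply hpq
              have hq' : q = p + (M - s' * γ) • e := by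
                have h5 := hmσ 0
                rw [hm0] at h5
                simpa using h5
              rw [segment_eq_image']
              refine ⟨t / (M - s' * γ), ⟨div_nonneg ht0 hE0.le, ?_⟩, ?_⟩
              · rw [div_le_one hE0]; linarith
              · show p + (t / (M - s' * γ)) • (q - p) = p + t • e
                rw [hq']
                have h7 : p + (M - s' * γ) • e - p = (M - s' * γ) • e := by abel
                rw [h7, smul_smul, div_mul_cancel₀ t (ne_of_gt hE0)]
          · set σ : ℝ := s' - (M - t)/γ with hσdef
            have hσ0 : 0 ≤ σ := by
              rw [hσdef]
              have h5 : (M - t)/γ ≤ s' := by rw [div_le_iff₀ hγ0]; linarith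
              linarith
            have hσlt : σ < s' := by
              rw [hσdef]
              have h5 : 0 < (M - t)/γ := div_pos (by linarith) hγ0
              linarith
            apply hbelow σ hσ0 hσlt
            have hmeq : m σ = p + t • e := by
              rw [hmσ σ, hσdef]
              have h9 : M - (s' - (s' - (M - t)/γ)) * γ = t := by
                field_simp
                ring
              rw [h9]
            rw [hmeq]
            exact right_mem_segment ℝ p (p + t • e)
    · -- non-degenerate: construct the configuration
      set β : ℝ := ‖n0‖ with hβ
      have hβpos : 0 < β := by rw [hβ, norm_pos_iff]; exact hn0
      set v : E2 := β⁻¹ • n0 with hv'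
      have hv : ‖v‖ = 1 := by
        rw [hv', norm_smul, Real.norm_eq_abs, abs_of_pos (inv_pos.2 hβpos), ← hβ]
        field_simp
      have hen0 : ⟪e, n0⟫ = (0:ℝ) := by
        have h5 : ⟪e, r - q⟫ = γ := by rw [hγ, real_inner_comm]
        rw [hn0def, inner_sub_right, real_inner_smul_right, hee, h5]
        ring
      have hev : ⟪e, v⟫ = (0:ℝ) := by rw [hv', real_inner_smul_right, hen0, mul_zero]
      have hβv : β • v = n0 := by
        rw [hv', smul_smul, mul_inv_cancel₀ (ne_of_gt hβpos), one_smul]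
      have hrqd : r - q = γ • e + β • v := by rw [hβv, hn0def]; abel
      set T : Set ℝ := {t | t ∈ Icc 0 M ∧ p + t • e ∉ D} with hT
      have hTne : T.Nonempty := by
        obtain ⟨t, ht0, htM, hze⟩ := hseg_pt z hzseg
        exact ⟨t, ⟨ht0, htM⟩, by rw [← hze]; exact hzD⟩
      have hTclosed : IsClosed T := by
        have h5 : T = Icc 0 M ∩ ((fun t : ℝ => p + t • e) ⁻¹' Dᶜ) := rfl
        rw [h5]
        exact isClosed_Icc.inter ((isClosed_compl_iff.2 hD).preimage
          (continuous_const.add (continuous_id.smul continuous_const)))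
      have hTbB : BddBelow T := ⟨0, fun z' hz' => hz'.1.1⟩
      have hTbA : BddAbove T := ⟨M, fun z' hz' => hz'.1.2⟩
      set tmin : ℝ := sInf T with htmindef
      set tmax : ℝ := sSup T with htmaxdef
      have htminT : tmin ∈ T := hTclosed.csInf_mem hTne hTbB
      have htmaxT : tmax ∈ T := hTclosed.csSup_mem hTne hTbA
      have h0T : (0:ℝ) ∉ T := fun hcon => hcon.2 (by simpa using hp)
      have hMT : M ∉ T := by
        intro hcon
        apply hcon.2
        rw [← hms'e]
        exact hms'D
      have htminpos : 0 < tmin :=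
        lt_of_le_of_ne htminT.1.1 (fun hcon => h0T (hcon ▸ htminT))
      have htmaxM : tmax < M :=
        lt_of_le_of_ne htmaxT.1.2 (fun hcon => hMT (hcon ▸ htmaxT))
      have htminmax : tmin ≤ tmax := csInf_le_csSup hTne hTbB hTbA
      set t₁ : ℝ := tmin/2 with ht₁def
      set t₂ : ℝ := (tmax + M)/2 with ht₂def
      have ht₁pos : 0 < t₁ := by rw [ht₁def]; linarith
      have ht₁min : t₁ < tmin := by rw [ht₁def]; linarith
      have ht₂max : tmax < t₂ := by rw [ht₂def]; linarith
      have ht₂M : t₂ < M := by rw [ht₂def]; linarith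
      have ht₁₂ : t₁ < t₂ := by linarith
      have ht₂D : p + t₂ • e ∈ D := by
        by_contra hcon
        have h5 : t₂ ∈ T := ⟨⟨by linarith, by linarith⟩, hcon⟩
        have h6 := le_csSup hTbA h5
        rw [← htmaxdef] at h6
        linarith
      have hτ₀D : p + tmin • e ∉ D := htminT.2
      set η : ℝ := min (s' * t₁ * β / (2*M))
        (min (t₁*β/(2*(|γ|+1))) ((M - t₂)*β/(2*(|γ|+1)))) with hηdef
      have hηpos : 0 < η := by
        apply lt_min
        · apply div_pos
          · exact mul_pos (mul_pos hs'pos ht₁pos) hβpos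
          · linarith
        apply lt_min
        · apply div_pos (mul_pos ht₁pos hβpos)
          have := abs_nonneg γ
          linarith
        · apply div_pos (mul_pos (by linarith) hβpos)
          have := abs_nonneg γ
          linarith
      refine ⟨p, e, v, t₁, t₂, η, tmin, he, hv, hev, ht₁₂, hηpos, ?_, ht₂D,
        ht₁min, by linarith, hτ₀D⟩
      -- the band
      intro t htt₁ htt₂ u hu1 hu2
      set Dem : ℝ := t * β - u * γ with hDemdef
      have hηa : η ≤ s' * t₁ * β / (2*M) := min_le_left _ _
      have hηb : η ≤ t₁*β/(2*(|γ|+1)) := le_trans (min_le_right _ _) (min_le_left _ _)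
      have hηc : η ≤ (M - t₂)*β/(2*(|γ|+1)) :=
        le_trans (min_le_right _ _) (min_le_right _ _)
      have habsγ : (0:ℝ) ≤ |γ| := abs_nonneg γ
      have hηγb : η * |γ| ≤ t₁ * β / 2 := by
        have h5 : η * (|γ|+1) ≤ t₁*β/2 := by
          have h6 : η * (|γ|+1) ≤ (t₁*β/(2*(|γ|+1))) * (|γ|+1) :=
            mul_le_mul_of_nonneg_right hηb (by linarith)
          have h7 : (t₁*β/(2*(|γ|+1))) * (|γ|+1) = t₁*β/2 := by
            field_simp
          linarith [h7 ▸ h6]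
        nlinarith [hηpos]
      have hηγc : η * |γ| ≤ (M - t₂) * β / 2 := by
        have h5 : η * (|γ|+1) ≤ (M - t₂)*β/2 := by
          have h6 : η * (|γ|+1) ≤ ((M - t₂)*β/(2*(|γ|+1))) * (|γ|+1) :=
            mul_le_mul_of_nonneg_right hηc (by linarith)
          have h7 : ((M - t₂)*β/(2*(|γ|+1))) * (|γ|+1) = (M - t₂)*β/2 := by
            field_simp
          linarith [h7 ▸ h6]
        nlinarith [hηpos]
      have hlow : -(η * |γ|) ≤ -u * γ := by
        nlinarith [mul_nonneg (by linarith : (0:ℝ) ≤ -u)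
            (by linarith [le_abs_self γ, neg_abs_le γ] : (0:ℝ) ≤ γ + |γ|),
          mul_le_mul_of_nonneg_right (by linarith : -u ≤ η) habsγ]
      have hupp : -u * γ ≤ η * |γ| := by
        nlinarith [mul_nonneg (by linarith : (0:ℝ) ≤ -u)
            (by linarith [le_abs_self γ, neg_abs_le γ] : (0:ℝ) ≤ |γ| - γ),
          mul_le_mul_of_nonneg_right (by linarith : -u ≤ η) habsγ]
      have hDemlb : t₁ * β / 2 ≤ Dem := by
        have h5 : t₁ * β ≤ t * β := mul_le_mul_of_nonneg_right htt₁ hβpos.le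
        rw [hDemdef]
        linarith [hlow, hηγb]
      have ht₁β : 0 < t₁ * β := mul_pos ht₁pos hβpos
      have hDempos : 0 < Dem := lt_of_lt_of_le (by linarith) hDemlb
      have hDemub : Dem < M * β := by
        have h5 : t * β ≤ t₂ * β := mul_le_mul_of_nonneg_right htt₂ hβpos.le
        have h6 : 0 < (M - t₂) * β := mul_pos (by linarith) hβpos
        rw [hDemdef]
        linarith [hupp, hηγc]
      set δ : ℝ := (-u) * M / Dem with hδdef
      set τ : ℝ := Dem / (M * β) with hτdef
      have hδpos : 0 < δ := div_pos (mul_pos (by linarith) hMpos) hDempos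
      have hδle : δ ≤ s' := by
        have h5 : δ ≤ η * M / (t₁ * β / 2) := by
          apply div_le_div₀ (mul_nonneg hηpos.le hMpos.le)
          · exact mul_le_mul_of_nonneg_right (by linarith) hMpos.le
          · linarith
          · exact hDemlb
        have h6 : η * (2*M) ≤ s' * t₁ * β := by
          rw [← le_div_iff₀ (by linarith : (0:ℝ) < 2*M)]
          exact hηa
        have h7 : η * M / (t₁ * β / 2) ≤ s' := by
          rw [div_le_iff₀ (by linarith [mul_pos ht₁pos hβpos] : (0:ℝ) < t₁ * β / 2)]
          nlinarith
        linarith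
      set σ : ℝ := s' - δ with hσdef
      have hσlt : σ < s' := by rw [hσdef]; linarith
      have hτ0 : 0 ≤ τ := le_of_lt (div_pos hDempos (mul_pos hMpos hβpos))
      have hτ1 : τ ≤ 1 := by
        rw [hτdef, div_le_one (mul_pos hMpos hβpos)]
        exact hDemub.le
      have h5 : m σ = m s' - δ • (r - q) := by
        rw [show m σ = q + σ • (r - q) from rfl, show m s' = q + s' • (r - q) from rfl,
          hσdef]
        module
      have h6 : m σ - p = (M - δ*γ) • e - (δ*β) • v := by
        rw [h5, hms'e, hrqd]
        module
      apply hbelow σ (by rw [hσdef]; linarith) hσlt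
      rw [segment_eq_image']
      have hDemne : Dem ≠ 0 := ne_of_gt hDempos
      have hMne : M ≠ 0 := ne_of_gt hMpos
      have hβne : β ≠ 0 := ne_of_gt hβpos
      have hid1 : τ * (δ*β) = -u := by
        rw [hτdef, hδdef]
        field_simp
      have hid2 : τ * (M - δ*γ) = t := by
        rw [hτdef, hδdef, hDemdef]
        have hDemne' : t * β - u * γ ≠ 0 := hDemne
        field_simp
        ring
      refine ⟨τ, ⟨hτ0, hτ1⟩, ?_⟩
      show p + τ • (m σ - p) = p + t • e + u • v
      rw [h6, smul_sub, smul_smul τ (M - δ*γ), smul_smul τ (δ*β), hid1, hid2]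
      module


end Column

end Reentrant

theorem nonconvex_domain_has_reentrant_point (D : Set E2) (hD : IsOpen D)
    (hb : Bornology.IsBounded D) (hc : IsConnected D) (hnc : ¬ Convex ℝ D) :
    ∃ y ∈ frontier D, ∃ P : Set E2,
      (∃ n : E2, ‖n‖ = 1 ∧ ∃ c : ℝ, P = {x : E2 | ⟪x, n⟫ ≤ c}) ∧
      y ∈ frontier P ∧
      ∃ r > 0,
        P ∩ (closure (Metric.ball y r) \ {y}) ⊆ D ∧
        (frontier D \ {y}) ∩ Metric.ball y r ⊆ Pᶜ := by
  classical
  rw [convex_iff_segment_subset] at hnc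
  push_neg at hnc
  obtain ⟨a, ha, b, hbD, hseg⟩ := hnc
  set Rel : E2 → E2 → Prop := fun x y => x ∈ D ∧ y ∈ D ∧ segment ℝ x y ⊆ D with hRel
  have hreach : Relation.ReflTransGen Rel a b := by
    set U : Set E2 := {x | x ∈ D ∧ Relation.ReflTransGen Rel a x} with hU
    set V : Set E2 := {x | x ∈ D ∧ ¬ Relation.ReflTransGen Rel a x} with hV
    have hUopen : IsOpen U := by
      rw [Metric.isOpen_iff]
      rintro x ⟨hxD, hxR⟩
      obtain ⟨ε, hε, hball⟩ := Metric.isOpen_iff.1 hD x hxD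
      refine ⟨ε, hε, fun y hy => ⟨hball hy, ?_⟩⟩
      refine hxR.tail ?_
      refine ⟨hxD, hball hy, fun z hz => hball ?_⟩
      exact (convex_ball x ε).segment_subset (Metric.mem_ball_self hε) hy hz
    have hVopen : IsOpen V := by
      rw [Metric.isOpen_iff]
      rintro x ⟨hxD, hxR⟩
      obtain ⟨ε, hε, hball⟩ := Metric.isOpen_iff.1 hD x hxD
      refine ⟨ε, hε, fun y hy => ⟨hball hy, fun hyR => hxR ?_⟩⟩
      refine hyR.tail ?_
      refine ⟨hball hy, hxD, fun z hz => hball ?_⟩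
      exact (convex_ball x ε).segment_subset hy (Metric.mem_ball_self hε) hz
    by_contra hnr
    obtain ⟨x, hxD2, hxU, hxV⟩ := hc.isPreconnected U V hUopen hVopen
      (fun x hx => by
        by_cases hcase : Relation.ReflTransGen Rel a x
        · exact Or.inl ⟨hx, hcase⟩
        · exact Or.inr ⟨hx, hcase⟩)
      ⟨a, ha, ha, Relation.ReflTransGen.refl⟩ ⟨b, hbD, hbD, hnr⟩
    exact hxV.2 hxU.2
  have hstraight : ∀ x : E2, Relation.ReflTransGen Rel a x →
      segment ℝ a x ⊆ D ∨ Reentrant.Config D := by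
    intro x hx
    induction hx with
    | refl =>
        left
        rw [segment_same]
        exact Set.singleton_subset_iff.2 ha
    | tail hq hqx ih =>
        rcases ih with hseg' | hcfg
        · exact Reentrant.tri hD ha hseg' hqx.2.2
        · exact Or.inr hcfg
  rcases hstraight b hreach with hsegab | hcfg
  · exact absurd hsegab hseg
  · exact Reentrant.config_main hD hcfg
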